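/- arXiv:1810.05058 — 3 statements merged into one kernel-verified Lean document; each statement's English description precedes it below -/
import Mathlib

section
/- (Hausdorff) Let κ ≤ λ be infinite cardinals such that λ^{<κ} = λ. Then there exists a κ-independent family F of subsets of λ (i.e., of the set of ordinals less than λ) with |F| = 2^λ. -/
/-!
Following Hausdorff, let `X` be the set of pairs `(s, S)` with `s ⊆ λ`, `|s| < κ` and `S` a family
of fewer than `κ` subsets of `s`, and to `A ⊆ λ` attach `X_A = {(s, S) | A ∩ s ∈ S}`. Given
disjoint `σ, τ` of size `< κ`, pick for each `A ∈ σ`, `B ∈ τ` a point of `A ∆ B`; these form a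
set `s` of size `< κ` on which the traces of members of `σ` and of `τ` differ, so
`(s, {A ∩ s | A ∈ σ})` lies in every `X_A`, `A ∈ σ`, and in no `X_B`, `B ∈ τ`. Hence `A ↦ X_A`
is a `κ`-independent family of `2^λ` sets, and `λ^{<κ} = λ` gives `|X| ≤ λ`, so a surjection
`λ → X` pulls it back to `λ`.
-/

universe u

/-- A family `F` of subsets of `X` is `κ`-independent if for any disjoint
subfamilies `σ, τ ⊆ F` each of cardinality less than `κ` there is a point of
`X` belonging to every member of `σ` and to no member of `τ`. -/
def IsIndepFamily {X : Type u} (κ : Cardinal.{u}) (F : Set (Set X)) : Prop :=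
  ∀ σ τ : Set (Set X), σ ⊆ F → τ ⊆ F → Disjoint σ τ →
    Cardinal.mk σ < κ → Cardinal.mk τ < κ →
      ∃ x : X, (∀ A ∈ σ, x ∈ A) ∧ ∀ A ∈ τ, x ∉ A

open Cardinal Set Function

universe v w

def IsIndepIndexedFamily {ι : Type u} {X : Type v} (κ : Cardinal.{u}) (G : ι → Set X) : Prop :=
  ∀ σ τ : Set ι, Disjoint σ τ → #σ < κ → #τ < κ →
    ∃ x : X, (∀ i ∈ σ, x ∈ G i) ∧ ∀ i ∈ τ, x ∉ G i

namespace IsIndepIndexedFamily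

variable {ι : Type u} {X : Type v} {κ : Cardinal.{u}} {G : ι → Set X}

theorem preimage (hG : IsIndepIndexedFamily κ G) {Y : Type w} {f : Y → X} (hf : Surjective f) :
    IsIndepIndexedFamily κ fun i => f ⁻¹' G i := by
  intro σ τ hστ hσ hτ
  obtain ⟨x, hxσ, hxτ⟩ := hG σ τ hστ hσ hτ
  obtain ⟨y, rfl⟩ := hf x
  exact ⟨y, hxσ, hxτ⟩

theorem injective (hG : IsIndepIndexedFamily κ G) (hκ : 1 < κ) : Injective G := by
  intro i j hij
  by_contra hne
  obtain ⟨x, hi, hj⟩ := hG {i} {j} (disjoint_singleton.2 hne) (by rwa [mk_singleton])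
    (by rwa [mk_singleton])
  exact hj j rfl (hij ▸ hi i rfl)

theorem isIndepFamily_range {X : Type u} {G : ι → Set X} (hG : IsIndepIndexedFamily κ G)
    (hinj : Injective G) : IsIndepFamily κ (range G) := by
  intro σ τ hσG hτG hστ hσ hτ
  obtain ⟨x, hxσ, hxτ⟩ := hG (G ⁻¹' σ) (G ⁻¹' τ) (hστ.preimage G)
    ((mk_preimage_of_injective G σ hinj).trans_lt hσ)
    ((mk_preimage_of_injective G τ hinj).trans_lt hτ)
  refine ⟨x, fun A hA => ?_, fun A hA => ?_⟩
  · obtain ⟨i, rfl⟩ := hσG hA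
    exact hxσ i hA
  · obtain ⟨i, rfl⟩ := hτG hA
    exact hxτ i hA

end IsIndepIndexedFamily

theorem exists_mk_Iio_toType_ord_eq {κ c : Cardinal.{u}} (hc : c < κ) :
    ∃ i : κ.ord.ToType, #(Iio i) = c := by
  have hc' : c.ord ∈ Iio κ.ord := ord_lt_ord.2 hc
  refine ⟨Ordinal.ToType.mk ⟨c.ord, hc'⟩, ?_⟩
  have h := congrArg (fun o => Ordinal.card o.1) (Ordinal.ToType.mk.symm_apply_apply ⟨c.ord, hc'⟩)
  rwa [card_ord] at h

theorem mk_subtype_mk_lt_le (α : Type u) (κ : Cardinal.{u}) :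
    #{t : Set α // #t < κ} ≤ κ * max #α ℵ₀ ^< κ := by
  have hcover : {t : Set α | #t < κ} ⊆ ⋃ i : κ.ord.ToType, {t | #t ≤ #(Iio i)} := fun t ht =>
    have ⟨i, hi⟩ := exists_mk_Iio_toType_ord_eq ht
    mem_iUnion.2 ⟨i, hi.ge⟩
  calc #{t : Set α // #t < κ}
      ≤ #(⋃ i : κ.ord.ToType, {t : Set α | #t ≤ #(Iio i)}) := mk_le_mk_of_subset hcover
    _ ≤ #κ.ord.ToType * ⨆ i : κ.ord.ToType, #{t : Set α | #t ≤ #(Iio i)} := mk_iUnion_le _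
    _ ≤ κ * max #α ℵ₀ ^< κ := by
      rw [mk_ord_toType]
      gcongr
      exact ciSup_le' fun i =>
        (mk_bounded_set_le α _).trans (le_powerlt _ (by simpa using mk_Iio_lt i (by simp)))

theorem mk_subtype_mk_lt_le_of_powerlt_eq {α : Type u} {κ lam : Cardinal.{u}}
    (hα : #α ≤ lam) (hlam : ℵ₀ ≤ lam) (hκ : κ ≤ lam) (h : lam ^< κ = lam) :
    #{t : Set α // #t < κ} ≤ lam := by
  have hpow : max #α ℵ₀ ^< κ ≤ lam := by
    rw [← h]
    exact powerlt_le.2 fun c hc =>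
      (power_le_power_right (max_le hα hlam)).trans (le_powerlt _ hc)
  calc #{t : Set α // #t < κ} ≤ κ * max #α ℵ₀ ^< κ := mk_subtype_mk_lt_le α κ
    _ ≤ lam * lam := mul_le_mul' hκ hpow
    _ = lam := mul_eq_self hlam

abbrev HausdorffPoint (κ : Cardinal.{u}) (Y : Type u) : Type u :=
  Σ s : {s : Set Y // #s < κ}, {S : Set (Set s) // #S < κ}

-- `(↑) ⁻¹' A : Set s` is the trace `A ∩ s`, viewed as a subset of `s`.
def hausdorffSet (κ : Cardinal.{u}) {Y : Type u} (A : Set Y) : Set (HausdorffPoint κ Y) :=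
  {p | ((↑) ⁻¹' A : Set p.1.1) ∈ p.2.1}

section Hausdorff

variable {κ : Cardinal.{u}} {Y : Type u}

theorem exists_mk_lt_preimage_ne (hκ : ℵ₀ ≤ κ) {σ τ : Set (Set Y)} (hστ : Disjoint σ τ)
    (hσ : #σ < κ) (hτ : #τ < κ) :
    ∃ s : Set Y, #s < κ ∧ ∀ A ∈ σ, ∀ B ∈ τ, ((↑) ⁻¹' A : Set s) ≠ (↑) ⁻¹' B := by
  have hsep : ∀ p : σ × τ, ∃ y, ¬(y ∈ (p.1 : Set Y) ↔ y ∈ (p.2 : Set Y)) := fun p => by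
    by_contra! h
    exact hστ.ne_of_mem p.1.2 p.2.2 (Set.ext h)
  choose w hw using hsep
  refine ⟨range w, mk_range_le.trans_lt ?_, fun A hA B hB hAB => hw (⟨A, hA⟩, ⟨B, hB⟩) ?_⟩
  · rw [mk_prod, lift_id, lift_id]
    exact mul_lt_of_lt hκ hσ hτ
  · exact Set.ext_iff.1 hAB ⟨_, mem_range_self _⟩

theorem isIndepIndexedFamily_hausdorffSet (hκ : ℵ₀ ≤ κ) :
    IsIndepIndexedFamily κ (hausdorffSet κ (Y := Y)) := by
  intro σ τ hστ hσ hτ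
  obtain ⟨s, hs, hsep⟩ := exists_mk_lt_preimage_ne hκ hστ hσ hτ
  refine ⟨⟨⟨s, hs⟩, ⟨(fun A => (↑) ⁻¹' A) '' σ, mk_image_le.trans_lt hσ⟩⟩,
    fun A hA => mem_image_of_mem _ hA, ?_⟩
  rintro B hB ⟨A, hA, hAB⟩
  exact hsep A hA B hB hAB

theorem mk_hausdorffPoint_le {lam : Cardinal.{u}} (hY : #Y ≤ lam) (hlam : ℵ₀ ≤ lam)
    (hκ : κ ≤ lam) (h : lam ^< κ = lam) : #(HausdorffPoint κ Y) ≤ lam := by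
  have hpow (s : {s : Set Y // #s < κ}) : #(Set s) ≤ lam :=
    calc #(Set s) = 2 ^ #s := mk_set
      _ ≤ lam ^ #s := power_le_power_right ((natCast_lt_aleph0 (n := 2)).le.trans hlam)
      _ ≤ lam := (le_powerlt lam s.2).trans h.le
  calc #(HausdorffPoint κ Y) = sum fun s => #{S : Set (Set s.1) // #S < κ} := mk_sigma _
    _ ≤ sum fun _ : {s : Set Y // #s < κ} => lam := sum_le_sum _ _ fun s =>
        mk_subtype_mk_lt_le_of_powerlt_eq (hpow s) hlam hκ h
    _ = #{s : Set Y // #s < κ} * lam := sum_const' _ _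
    _ ≤ lam * lam := mul_le_mul' (mk_subtype_mk_lt_le_of_powerlt_eq hY hlam hκ h) le_rfl
    _ = lam := mul_eq_self hlam

end Hausdorff

/-- Hausdorff: If `κ ≤ λ` are infinite cardinals with
`λ^{<κ} = λ`, then there is a `κ`-independent family of subsets of `λ`
(identified with the type of ordinals less than `λ`) of cardinality `2^λ`. -/
theorem exists_independent_family (κ lam : Cardinal.{u})
    (hκ : Cardinal.aleph0 ≤ κ) (hle : κ ≤ lam) (h : lam ^< κ = lam) :
    ∃ F : Set (Set lam.ord.ToType), IsIndepFamily κ F ∧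
      Cardinal.mk F = 2 ^ lam := by
  set Y := lam.ord.ToType
  have hY : #Y = lam := mk_ord_toType lam
  have hX := isIndepIndexedFamily_hausdorffSet (Y := Y) hκ
  obtain ⟨x, -⟩ := hX ∅ ∅ (disjoint_empty _) (by simpa using aleph0_pos.trans_le hκ)
    (by simpa using aleph0_pos.trans_le hκ)
  obtain ⟨e⟩ := (mk_hausdorffPoint_le hY.le (hκ.trans hle) hle h).trans hY.ge
  have : Nonempty (HausdorffPoint κ Y) := ⟨x⟩
  have hG := hX.preimage (invFun_surjective e.injective)
  have hinj := hG.injective (one_lt_aleph0.trans_le hκ)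
  exact ⟨range _, hG.isIndepFamily_range hinj, by rw [mk_range_eq _ hinj, mk_set, hY]⟩
end

section
/- (Solovay) Let δ be a regular uncountable cardinal and let ⟨S_α : α < δ⟩ be a partition of the set {ξ < δ : cf(ξ) = ω} into sets each of which is stationary in δ. Let A be the Solovay set associated to this partition: the set of all σ ⊆ δ such that σ = {α < δ : S_α ∩ sup(σ) is stationary in sup(σ)}. Then A belongs to every countably complete normal fine ultrafilter on P(δ). -/
/-!
Normality and fineness make almost every `σ` closed under countable suprema, closed under
`ξ ↦ α` for `ξ ∈ S α`, and without a largest element. For such `σ`, a stationary `S α ∩ sup σ`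
meets the closure points of `σ` at an ordinal of countable cofinality, which is then the supremum
of an `ω`-sequence in `σ`; so it lies in `σ`, and so does `α`.

Conversely, if almost every `σ` had an index in `σ` at which `S` does not reflect, normality fixes
that index `α₀`, and we may pick clubs `C σ` of `sup σ` avoiding `S α₀`. By countable completeness
the ordinals lying in almost every `C σ` form an unbounded subset of `δ` closed under
`ω`-suprema, so the stationary set `S α₀` of cofinality-`ω` points meets it: a contradiction.
-/

/-- `C` is club in the (limit) ordinal `γ`: `C` consists of ordinals less than
`γ`, is unbounded in `γ`, and is closed under suprema of its nonempty subsets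
that are bounded below `γ`. -/
def IsClubIn (C : Set Ordinal) (γ : Ordinal) : Prop :=
  C ⊆ Set.Iio γ ∧ (∀ β < γ, ∃ ξ ∈ C, β ≤ ξ) ∧
    ∀ s ⊆ C, s.Nonempty → sSup s < γ → sSup s ∈ C

/-- `S` is stationary in `γ`: `S` meets every club subset of `γ`. -/
def IsStationaryIn (S : Set Ordinal) (γ : Ordinal) : Prop :=
  ∀ C : Set Ordinal, IsClubIn C γ → (S ∩ C).Nonempty

open Set Cardinal Ordinal

theorem countableInterFilter_of_iInter_nat_mem {α : Type*} {l : Filter α}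
    (h : ∀ s : ℕ → Set α, (∀ n, s n ∈ l) → ⋂ n, s n ∈ l) : CountableInterFilter l where
  countable_sInter_mem T hT hmem := by
    rcases T.eq_empty_or_nonempty with rfl | hne
    · simp
    obtain ⟨s, rfl⟩ := hT.exists_eq_range hne
    rw [sInter_range]
    exact h s fun n => hmem _ (mem_range_self n)

namespace Ordinal

theorem exists_seq_mem_iSup_eq_of_isLUB {X : Set Ordinal} {ξ : Ordinal} (hX : IsLUB X ξ)
    (hcof : ξ.cof = ℵ₀) : ∃ f : ℕ → Ordinal, (∀ n, f n ∈ X) ∧ ⨆ n, f n = ξ := by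
  by_cases hξ : ξ ∈ X
  · exact ⟨fun _ => ξ, fun _ => hξ, ciSup_const⟩
  obtain ⟨g, hg⟩ := exists_isFundamentalSeq (a := ω) (by rw [hcof, ord_aleph0])
  have hgξ : ∀ n : ℕ, (g ⟨n, natCast_lt_omega0 n⟩ : Ordinal) < ξ := fun n => (g _).2
  choose f hfX hgf using fun n => hX.exists_between (hgξ n)
  refine ⟨f, hfX, le_antisymm (Ordinal.iSup_le fun n => (hgf n).2) ?_⟩
  rw [← hg.iSup_eq one_lt_omega0]
  refine Ordinal.iSup_le fun ⟨i, hi⟩ => ?_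
  obtain ⟨n, rfl⟩ := lt_omega0.mp hi
  exact (hgf n).1.le.trans (Ordinal.le_iSup f n)

theorem iSup_eq_iSup_of_le_of_le_succ {a x : ℕ → Ordinal} (hax : ∀ n, a n ≤ x n)
    (hxa : ∀ n, x n ≤ a (n + 1)) : ⨆ n, x n = ⨆ n, a n :=
  le_antisymm (Ordinal.iSup_le fun n => (hxa n).trans (Ordinal.le_iSup a _))
    (Ordinal.iSup_le fun n => (hax n).trans (Ordinal.le_iSup x n))

theorem iSup_nat_lt_of_aleph0_lt_cof {γ : Ordinal} (hγ : ℵ₀ < γ.cof) {f : ℕ → Ordinal}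
    (hf : ∀ n, f n < γ) : ⨆ n, f n < γ :=
  lift_iSup_lt_of_lt_cof (by simpa using hγ) hf

end Ordinal

theorem IsClubIn.iSup_mem {C : Set Ordinal} {γ : Ordinal} (hC : IsClubIn C γ) {f : ℕ → Ordinal}
    (hf : ∀ n, f n ∈ C) (hlt : ⨆ n, f n < γ) : ⨆ n, f n ∈ C :=
  hC.2.2 _ (range_subset_iff.mpr hf) (range_nonempty f) hlt

def closurePoints (X : Set Ordinal) (γ : Ordinal) : Set Ordinal :=
  {ξ | ξ < γ ∧ IsLUB (X ∩ Iic ξ) ξ}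

theorem subset_closurePoints {X : Set Ordinal} {γ : Ordinal} (hX : X ⊆ Iio γ) :
    X ⊆ closurePoints X γ :=
  fun _ hx => ⟨hX hx, IsGreatest.isLUB ⟨⟨hx, self_mem_Iic⟩, fun _ hy => hy.2⟩⟩

theorem isClubIn_closurePoints {X : Set Ordinal} {γ : Ordinal} (hX : X ⊆ Iio γ)
    (hub : ∀ β < γ, ∃ x ∈ X, β ≤ x) : IsClubIn (closurePoints X γ) γ := by
  refine ⟨fun ξ hξ => hξ.1, fun β hβ => ?_, fun s hs hne hlt => ⟨hlt, fun _ hy => hy.2, ?_⟩⟩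
  · obtain ⟨x, hx, hβx⟩ := hub β hβ
    exact ⟨x, subset_closurePoints hX hx, hβx⟩
  · have hbdd : BddAbove s := ⟨γ, fun η hη => (hs hη).1.le⟩
    exact fun b hb => csSup_le hne fun η hη =>
      (hs hη).2.2 fun y hy => hb ⟨hy.1, hy.2.trans (le_csSup hbdd hη)⟩

theorem IsStationaryIn.inter_nonempty_of_iSup_mem {S D : Set Ordinal} {γ : Ordinal}
    (hS : IsStationaryIn S γ) (hcof : ∀ ξ ∈ S, ξ.cof = ℵ₀) (hD : D ⊆ Iio γ)
    (hub : ∀ β < γ, ∃ x ∈ D, β ≤ x)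
    (hcl : ∀ f : ℕ → Ordinal, (∀ n, f n ∈ D) → ⨆ n, f n < γ → ⨆ n, f n ∈ D) :
    (S ∩ D).Nonempty := by
  obtain ⟨ξ, hξS, hξγ, hξ⟩ := hS _ (isClubIn_closurePoints hD hub)
  obtain ⟨f, hfD, rfl⟩ := exists_seq_mem_iSup_eq_of_isLUB hξ (hcof _ hξS)
  exact ⟨_, hξS, hcl f (fun n => (hfD n).1) hξγ⟩

def reflectingIndices (γ : Ordinal) (S : Ordinal → Set Ordinal) (σ : Set Ordinal) :
    Set Ordinal :=
  {α | α < γ ∧ IsStationaryIn (S α ∩ Iio (sSup σ)) (sSup σ)}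

theorem reflectingIndices_subset {γ : Ordinal} {S : Ordinal → Set Ordinal} {σ : Set Ordinal}
    (hcof : ∀ α < γ, ∀ ξ ∈ S α, ξ.cof = ℵ₀) (hσ : σ ⊆ Iio (sSup σ))
    (hiSup : ∀ f : ℕ → Ordinal, (∀ n, f n ∈ σ) → ⨆ n, f n ∈ σ)
    (hindex : ∀ ξ ∈ σ, ∀ α < γ, ξ ∈ S α → α ∈ σ) : reflectingIndices γ S σ ⊆ σ := by
  rintro α ⟨hα, hrefl⟩
  obtain ⟨ξ, ⟨hξS, -⟩, hξσ⟩ := hrefl.inter_nonempty_of_iSup_mem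
    (fun ξ hξ => hcof α hα ξ hξ.1) hσ
    (fun β hβ => (exists_lt_of_lt_csSup' hβ).imp fun _ h => ⟨h.1, h.2.le⟩)
    (fun f hf _ => hiSup f hf)
  exact hindex ξ hξσ α hα hξS

namespace Ultrafilter

def IsNormal (𝒰 : Ultrafilter (Set Ordinal)) : Prop :=
  ∀ f : Set Ordinal → Ordinal,
    (∀ᶠ σ : Set Ordinal in 𝒰, f σ ∈ σ) → ∃ c, ∀ᶠ σ : Set Ordinal in 𝒰, f σ = c

def IsFine (𝒰 : Ultrafilter (Set Ordinal)) (γ : Ordinal) : Prop :=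
  ∀ α < γ, ∀ᶠ σ : Set Ordinal in 𝒰, α ∈ σ

namespace IsNormal

variable {𝒰 : Ultrafilter (Set Ordinal)} {γ : Ordinal}

theorem exists_eventually_of_exists_mem (h𝒰 : 𝒰.IsNormal) {p : Set Ordinal → Ordinal → Prop}
    (h : ∀ᶠ σ : Set Ordinal in 𝒰, ∃ x ∈ σ, p σ x) :
    ∃ c, ∀ᶠ σ : Set Ordinal in 𝒰, c ∈ σ ∧ p σ c := by
  choose! f hf using fun (σ : Set Ordinal) (hσ : ∃ x ∈ σ, p σ x) => hσ
  obtain ⟨c, hc⟩ := h𝒰 f (h.mono fun σ hσ => (hf σ hσ).1)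
  exact ⟨c, (h.and hc).mono fun σ ⟨hσ, hfc⟩ => hfc ▸ hf σ hσ⟩

theorem exists_eventually_inter_Ico_nonempty (h𝒰 : 𝒰.IsNormal) (hfine : 𝒰.IsFine γ)
    (hconc : ∀ᶠ σ : Set Ordinal in 𝒰, σ ⊆ Iio γ)
    (hsup : ∀ᶠ σ : Set Ordinal in 𝒰, σ ⊆ Iio (sSup σ)) {C : Set Ordinal → Set Ordinal}
    (hC : ∀ᶠ σ : Set Ordinal in 𝒰, IsClubIn (C σ) (sSup σ)) {β : Ordinal} (hβ : β < γ) :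
    ∃ ζ < γ, ∀ᶠ σ : Set Ordinal in 𝒰, (C σ ∩ Ico β ζ).Nonempty := by
  have h : ∀ᶠ σ : Set Ordinal in 𝒰, ∃ y ∈ σ, (C σ ∩ Ico β y).Nonempty := by
    filter_upwards [hC, hsup, hfine β hβ] with σ hCσ hσ hβσ
    obtain ⟨x, hxC, hβx⟩ := hCσ.2.1 β (hσ hβσ)
    obtain ⟨y, hyσ, hxy⟩ := exists_lt_of_lt_csSup' (mem_Iio.mp (hCσ.1 hxC))
    exact ⟨y, hyσ, x, hxC, hβx, hxy⟩
  obtain ⟨ζ, hζ⟩ := h𝒰.exists_eventually_of_exists_mem h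
  obtain ⟨σ, hζσ, hσγ⟩ := (hζ.and hconc).exists
  exact ⟨ζ, hσγ hζσ.1, hζ.mono fun σ h => h.2⟩

theorem eventually_subset_Iio_sSup (h𝒰 : 𝒰.IsNormal) (hfine : 𝒰.IsFine γ)
    (hγ : Order.IsSuccLimit γ) (hconc : ∀ᶠ σ : Set Ordinal in 𝒰, σ ⊆ Iio γ) :
    ∀ᶠ σ : Set Ordinal in 𝒰, σ ⊆ Iio (sSup σ) := by
  suffices h : ∀ᶠ σ : Set Ordinal in 𝒰, sSup σ ∉ σ by
    filter_upwards [h, hconc] with σ hσ hσγ x hx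
    exact (le_csSup ⟨γ, fun y hy => (hσγ hy).le⟩ hx).lt_of_ne (by rintro rfl; exact hσ hx)
  refine Ultrafilter.eventually_not.mpr fun h => ?_
  obtain ⟨c, hc⟩ := h𝒰.exists_eventually_of_exists_mem (p := fun σ x => x = sSup σ)
    (h.mono fun σ hσ => ⟨_, hσ, rfl⟩)
  obtain ⟨σ₀, hcσ₀, hσ₀γ⟩ := (hc.and hconc).exists
  obtain ⟨σ, ⟨-, hc⟩, hσγ, hsucc⟩ :=
    (hc.and (hconc.and (hfine _ (hγ.succ_lt (hσ₀γ hcσ₀.1))))).exists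
  have hle := le_csSup ⟨γ, fun y hy => (hσγ hy).le⟩ hsucc
  rw [← hc] at hle
  exact (Order.lt_succ c).not_ge hle

theorem eventually_index_mem (h𝒰 : 𝒰.IsNormal) (hfine : 𝒰.IsFine γ)
    {S : Ordinal → Set Ordinal} (hS : (Iio γ).PairwiseDisjoint S) :
    ∀ᶠ σ : Set Ordinal in 𝒰, ∀ ξ ∈ σ, ∀ α < γ, ξ ∈ S α → α ∈ σ := by
  by_contra h
  rw [← Ultrafilter.eventually_not] at h
  push Not at h
  obtain ⟨ξ, hξ⟩ := h𝒰.exists_eventually_of_exists_mem h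
  obtain ⟨-, -, α, hαγ, hξα, -⟩ := hξ.exists
  obtain ⟨σ, ⟨-, β, hβγ, hξβ, hβσ⟩, hασ⟩ := (hξ.and (hfine α hαγ)).exists
  exact hβσ (hS.elim_set hαγ hβγ ξ hξα hξβ ▸ hασ)

variable [CountableInterFilter (𝒰 : Filter (Set Ordinal))]

theorem eventually_iSup_mem (h𝒰 : 𝒰.IsNormal) (hfine : 𝒰.IsFine γ) (hγ : ℵ₀ < γ.cof)
    (hconc : ∀ᶠ σ : Set Ordinal in 𝒰, σ ⊆ Iio γ) :
    ∀ᶠ σ : Set Ordinal in 𝒰, ∀ f : ℕ → Ordinal, (∀ n, f n ∈ σ) → ⨆ n, f n ∈ σ := by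
  by_contra h
  rw [← Ultrafilter.eventually_not] at h
  push Not at h
  choose! F hF using
    fun (σ : Set Ordinal) (hσ : ∃ f : ℕ → Ordinal, (∀ n, f n ∈ σ) ∧ ⨆ n, f n ∉ σ) => hσ
  choose c hc using fun n => h𝒰.exists_eventually_of_exists_mem (p := fun σ x => F σ n = x)
    (h.mono fun σ hσ => ⟨F σ n, (hF σ hσ).1 n, rfl⟩)
  have hcγ : ∀ n, c n < γ := fun n =>
    let ⟨_, hcσ, hσγ⟩ := ((hc n).and hconc).exists
    hσγ hcσ.1
  have hsup := hfine _ (iSup_nat_lt_of_aleph0_lt_cof hγ hcγ)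
  obtain ⟨σ, hσ, hFc, hcσ⟩ := (h.and ((eventually_countable_forall.mpr hc).and hsup)).exists
  obtain rfl : F σ = c := funext fun n => (hFc n).2
  exact (hF σ hσ).2 hcσ

theorem exists_ge_eventually_mem (h𝒰 : 𝒰.IsNormal) (hfine : 𝒰.IsFine γ) (hγ : ℵ₀ < γ.cof)
    (hconc : ∀ᶠ σ : Set Ordinal in 𝒰, σ ⊆ Iio γ)
    (hsup : ∀ᶠ σ : Set Ordinal in 𝒰, σ ⊆ Iio (sSup σ)) {C : Set Ordinal → Set Ordinal}
    (hC : ∀ᶠ σ : Set Ordinal in 𝒰, IsClubIn (C σ) (sSup σ)) {β : Ordinal} (hβ : β < γ) :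
    ∃ ζ < γ, β ≤ ζ ∧ ∀ᶠ σ : Set Ordinal in 𝒰, ζ ∈ C σ := by
  choose! next hnextγ hnext using fun β (hβ : β < γ) =>
    h𝒰.exists_eventually_inter_Ico_nonempty hfine hconc hsup hC hβ
  set b : ℕ → Ordinal := fun n => next^[n] β with hb
  have hbγ : ∀ n, b n < γ := fun n => by
    induction n with
    | zero => exact hβ
    | succ n ih => simpa only [hb, Function.iterate_succ_apply'] using hnextγ _ ih
  have hstep : ∀ n, ∀ᶠ σ : Set Ordinal in 𝒰, (C σ ∩ Ico (b n) (b (n + 1))).Nonempty := fun n => by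
    simpa only [hb, Function.iterate_succ_apply'] using hnext _ (hbγ n)
  have hbsup : ⨆ n, b n < γ := iSup_nat_lt_of_aleph0_lt_cof hγ hbγ
  -- almost every `C σ` meets each `[b n, b (n + 1))`, hence contains `⨆ n, b n`
  refine ⟨⨆ n, b n, hbsup, Ordinal.le_iSup b 0, ?_⟩
  filter_upwards [eventually_countable_forall.mpr hstep, hC, hsup, hfine _ hbsup]
    with σ hx hCσ hσ hbσ
  choose x hxC hxb using hx
  rw [← iSup_eq_iSup_of_le_of_le_succ (fun n => (hxb n).1) fun n => (hxb n).2.le] at hbσ ⊢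
  exact hCσ.iSup_mem hxC (hσ hbσ)

theorem exists_mem_eventually_mem_of_isStationaryIn (h𝒰 : 𝒰.IsNormal) (hfine : 𝒰.IsFine γ)
    (hγ : ℵ₀ < γ.cof) (hconc : ∀ᶠ σ : Set Ordinal in 𝒰, σ ⊆ Iio γ)
    (hsup : ∀ᶠ σ : Set Ordinal in 𝒰, σ ⊆ Iio (sSup σ)) {C : Set Ordinal → Set Ordinal}
    (hC : ∀ᶠ σ : Set Ordinal in 𝒰, IsClubIn (C σ) (sSup σ)) {S : Set Ordinal}
    (hS : IsStationaryIn S γ) (hcof : ∀ ξ ∈ S, ξ.cof = ℵ₀) :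
    ∃ ξ ∈ S, ∀ᶠ σ : Set Ordinal in 𝒰, ξ ∈ C σ := by
  obtain ⟨ξ, hξS, -, hξ⟩ := hS.inter_nonempty_of_iSup_mem
    (D := {ζ | ζ < γ ∧ ∀ᶠ σ : Set Ordinal in 𝒰, ζ ∈ C σ}) hcof (fun ζ hζ => hζ.1)
    (fun β hβ =>
      let ⟨ζ, hζγ, hβζ, hζ⟩ := h𝒰.exists_ge_eventually_mem hfine hγ hconc hsup hC hβ
      ⟨ζ, ⟨hζγ, hζ⟩, hβζ⟩)
    (fun f hf hfγ => ⟨hfγ, by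
      filter_upwards [eventually_countable_forall.mpr fun n => (hf n).2, hC, hsup, hfine _ hfγ]
        with σ hfC hCσ hσ hfσ
      exact hCσ.iSup_mem hfC (hσ hfσ)⟩)
  exact ⟨ξ, hξS, hξ⟩

theorem eventually_subset_reflectingIndices (h𝒰 : 𝒰.IsNormal) (hfine : 𝒰.IsFine γ)
    (hγ : ℵ₀ < γ.cof) (hconc : ∀ᶠ σ : Set Ordinal in 𝒰, σ ⊆ Iio γ)
    (hsup : ∀ᶠ σ : Set Ordinal in 𝒰, σ ⊆ Iio (sSup σ)) {S : Ordinal → Set Ordinal}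
    (hS : ∀ α < γ, IsStationaryIn (S α) γ) (hcof : ∀ α < γ, ∀ ξ ∈ S α, ξ.cof = ℵ₀) :
    ∀ᶠ σ : Set Ordinal in 𝒰, σ ⊆ reflectingIndices γ S σ := by
  by_contra h
  rw [← Ultrafilter.eventually_not] at h
  simp only [not_subset] at h
  obtain ⟨α, hα⟩ := h𝒰.exists_eventually_of_exists_mem h
  obtain ⟨σ, ⟨hασ, -⟩, hσγ⟩ := (hα.and hconc).exists
  have hαγ : α < γ := hσγ hασ
  have hnonrefl : ∀ᶠ σ : Set Ordinal in 𝒰,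
      ∃ C, IsClubIn C (sSup σ) ∧ ¬(S α ∩ Iio (sSup σ) ∩ C).Nonempty := by
    filter_upwards [hα] with σ hσ
    simpa [IsStationaryIn, reflectingIndices, hαγ] using hσ.2
  choose! C hC hCS using fun (σ : Set Ordinal) (h : ∃ C, IsClubIn C (sSup σ) ∧
    ¬(S α ∩ Iio (sSup σ) ∩ C).Nonempty) => h
  obtain ⟨ξ, hξS, hξ⟩ := h𝒰.exists_mem_eventually_mem_of_isStationaryIn hfine hγ hconc hsup
    (hnonrefl.mono fun σ hσ => hC σ hσ) (hS α hαγ) (hcof α hαγ)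
  obtain ⟨σ, hσ, hξσ⟩ := (hnonrefl.and hξ).exists
  exact hCS σ hσ ⟨ξ, ⟨hξS, (hC σ hσ).1 hξσ⟩, hξσ⟩

end IsNormal

end Ultrafilter

theorem solovay_set_mem_normal_fine_ultrafilter_general (δ : Cardinal) (hreg : δ.IsRegular)
    (hunc : Cardinal.aleph0 < δ) (S : Ordinal → Set Ordinal)
    (hsub : ∀ α < δ.ord, S α ⊆ {ξ : Ordinal | ξ < δ.ord ∧ Ordinal.cof ξ = Cardinal.aleph0})
    (hdisj : ∀ α < δ.ord, ∀ β < δ.ord, α ≠ β → Disjoint (S α) (S β))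
    (hstat : ∀ α < δ.ord, IsStationaryIn (S α) δ.ord)
    (𝒰 : Ultrafilter (Set Ordinal))
    (hconc : {σ : Set Ordinal | σ ⊆ Set.Iio δ.ord} ∈ 𝒰)
    (hcc : ∀ s : ℕ → Set (Set Ordinal), (∀ n, s n ∈ 𝒰) → (⋂ n, s n) ∈ 𝒰)
    (hfine : ∀ α < δ.ord, {σ : Set Ordinal | α ∈ σ} ∈ 𝒰)
    (hnormal : ∀ f : Set Ordinal → Ordinal,
      {σ : Set Ordinal | f σ ∈ σ} ∈ 𝒰 → ∃ c : Ordinal, {σ : Set Ordinal | f σ = c} ∈ 𝒰) :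
    {σ : Set Ordinal | σ ⊆ Set.Iio δ.ord ∧
      σ = {α : Ordinal | α < δ.ord ∧
        IsStationaryIn (S α ∩ Set.Iio (sSup σ)) (sSup σ)}} ∈ 𝒰 := by
  have : CountableInterFilter (𝒰 : Filter (Set Ordinal)) :=
    countableInterFilter_of_iInter_nat_mem hcc
  have h𝒰 : 𝒰.IsNormal := hnormal
  have hfine : 𝒰.IsFine δ.ord := hfine
  have hcof : ℵ₀ < δ.ord.cof := hreg.cof_ord.symm ▸ hunc
  have hcofS : ∀ α < δ.ord, ∀ ξ ∈ S α, ξ.cof = ℵ₀ := fun α hα ξ hξ => (hsub α hα hξ).2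
  have hsup := h𝒰.eventually_subset_Iio_sSup hfine (isSuccLimit_ord hreg.aleph0_le) hconc
  filter_upwards [hconc, hsup, h𝒰.eventually_iSup_mem hfine hcof hconc,
    h𝒰.eventually_index_mem hfine fun α hα β hβ => hdisj α hα β hβ,
    h𝒰.eventually_subset_reflectingIndices hfine hcof hconc hsup hstat hcofS]
    with σ hσγ hσ hiSup hindex hrefl
  exact ⟨hσγ, hrefl.antisymm (reflectingIndices_subset hcofS hσ hiSup hindex)⟩

/-- Solovay: Let `δ` be a regular uncountable cardinal and let
`⟨S α : α < δ⟩` be a partition of `{ξ < δ : cf ξ = ω}` into sets stationary in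
`δ`.  Then the associated Solovay set — the set of all `σ ⊆ δ` such that
`σ = {α < δ : S α ∩ sup σ is stationary in sup σ}` — belongs to every
countably complete normal fine ultrafilter on `P(δ)` (formalized as an
ultrafilter on `Set Ordinal` concentrating on the powerset of `Set.Iio δ.ord`). -/
theorem solovay_set_mem_normal_fine_ultrafilter (δ : Cardinal) (hreg : δ.IsRegular)
    (hunc : Cardinal.aleph0 < δ) (S : Ordinal → Set Ordinal)
    (hsub : ∀ α < δ.ord, S α ⊆ {ξ : Ordinal | ξ < δ.ord ∧ Ordinal.cof ξ = Cardinal.aleph0})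
    (hdisj : ∀ α < δ.ord, ∀ β < δ.ord, α ≠ β → Disjoint (S α) (S β))
    (hcover : {ξ : Ordinal | ξ < δ.ord ∧ Ordinal.cof ξ = Cardinal.aleph0} ⊆
      ⋃ α ∈ Set.Iio δ.ord, S α)
    (hstat : ∀ α < δ.ord, IsStationaryIn (S α) δ.ord)
    (𝒰 : Ultrafilter (Set Ordinal))
    (hconc : {σ : Set Ordinal | σ ⊆ Set.Iio δ.ord} ∈ 𝒰)
    (hcc : ∀ s : ℕ → Set (Set Ordinal), (∀ n, s n ∈ 𝒰) → (⋂ n, s n) ∈ 𝒰)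
    (hfine : ∀ α < δ.ord, {σ : Set Ordinal | α ∈ σ} ∈ 𝒰)
    (hnormal : ∀ f : Set Ordinal → Ordinal,
      {σ : Set Ordinal | f σ ∈ σ} ∈ 𝒰 → ∃ c : Ordinal, {σ : Set Ordinal | f σ = c} ∈ 𝒰) :
    {σ : Set Ordinal | σ ⊆ Set.Iio δ.ord ∧
      σ = {α : Ordinal | α < δ.ord ∧
        IsStationaryIn (S α ∩ Set.Iio (sSup σ)) (sSup σ)}} ∈ 𝒰 :=
  solovay_set_mem_normal_fine_ultrafilter_general δ hreg hunc S hsub hdisj hstat 𝒰 hconc hcc hfine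
    hnormal
end

section
/- Let δ be a regular uncountable cardinal carrying a tail-uniform countably complete ultrafilter. Then there exists a countably complete tail-uniform ultrafilter W on δ such that: (1) every regressive function f on δ (f(α) < α for all 0 < α < δ) is bounded on a W-large set, i.e., there is β < δ with {α < δ : f(α) < β} ∈ W; and (2) the set {α < δ : α carries no tail-uniform countably complete ultrafilter} belongs to W. -/
/-!
Call `W' ◁ W` (the Ketonen order) when `W'` is a `W`-limit of countably complete ultrafilters
`G a` concentrating below `a`. By countable completeness this order is well-founded on countably
complete ultrafilters, so among the countably complete tail-uniform ultrafilters on `δ` in which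
every regressive function is bounded there is a `◁`-minimal one, `W`. Such ultrafilters exist:
push any countably complete tail-uniform `B` forward along a function that is minimal modulo `B`
among those keeping the image tail-uniform. If `W`-almost every `α` carried a countably complete
tail-uniform ultrafilter `V α`, the same construction applied to the limit of the `V α` would
produce such an ultrafilter strictly below `W`.
-/

open Set Filter

/-- A (tail) uniform ultrafilter on the ordinal `α`: an ultrafilter on `Ordinal`
concentrating on `Set.Iio α` and extending the tail filter on `α`, i.e. containing
every interval `[γ, α)` for `γ < α`. -/
def IsTailUniformOn (U : Ultrafilter Ordinal) (α : Ordinal) : Prop :=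
  Set.Iio α ∈ U ∧ ∀ γ < α, Set.Ico γ α ∈ U

/-- An ultrafilter is countably complete if it is closed under countable
intersections. -/
def IsCountablyComplete (U : Ultrafilter Ordinal) : Prop :=
  ∀ s : ℕ → Set Ordinal, (∀ n, s n ∈ U) → (⋂ n, s n) ∈ U

namespace Ultrafilter

variable {α β γ : Type*}

theorem eventually_bind {U : Ultrafilter α} {G : α → Ultrafilter β} {p : β → Prop} :
    (∀ᶠ b in U.bind G, p b) ↔ ∀ᶠ a in U, ∀ᶠ b in G a, p b :=
  Iff.rfl

theorem map_bind (f : β → γ) (U : Ultrafilter α) (G : α → Ultrafilter β) :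
    (U.bind G).map f = U.bind fun a => (G a).map f :=
  coe_injective rfl

end Ultrafilter

theorem isCountablyComplete_pure (a : Ordinal) : IsCountablyComplete (pure a) :=
  fun _ hs => mem_iInter.2 hs

namespace IsCountablyComplete

variable {U : Ultrafilter Ordinal}

theorem eventually_forall (hU : IsCountablyComplete U) {p : ℕ → Ordinal → Prop}
    (h : ∀ n, ∀ᶠ a in U, p n a) : ∀ᶠ a in U, ∀ n, p n a :=
  mem_of_superset (hU _ h) fun _ ha => mem_iInter.1 ha

theorem map (hU : IsCountablyComplete U) (f : Ordinal → Ordinal) :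
    IsCountablyComplete (U.map f) := by
  intro s hs
  simpa only [Ultrafilter.mem_map, preimage_iInter] using hU _ hs

theorem bind (hU : IsCountablyComplete U) {G : Ordinal → Ultrafilter Ordinal}
    (hG : ∀ a, IsCountablyComplete (G a)) : IsCountablyComplete (U.bind G) :=
  fun s hs => (hU.eventually_forall hs).mono fun a ha => hG a s ha

theorem wellFounded_eventually_lt (hU : IsCountablyComplete U) :
    WellFounded fun g f : Ordinal → Ordinal => ∀ᶠ a in U, g a < f a := by
  refine wellFounded_iff_isEmpty_descending_chain.2 ⟨fun ⟨f, hf⟩ => ?_⟩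
  obtain ⟨a, ha⟩ := (hU.eventually_forall hf).exists
  obtain ⟨n, hn⟩ := WellFounded.not_rel_apply_succ (r := (· < ·)) fun n => f n a
  exact hn (ha n)

end IsCountablyComplete

def KetonenLT (W' W : Ultrafilter Ordinal) : Prop :=
  ∃ G : Ordinal → Ultrafilter Ordinal, (∀ a, IsCountablyComplete (G a)) ∧
    (∀ᶠ a in W, ∀ᶠ b in G a, b < a) ∧ W' = W.bind G

def CanDescend (G : ℕ → Ordinal → Ultrafilter Ordinal) : ℕ → ℕ → Ordinal → Prop
  | 0, _, _ => True
  | k + 1, n, a => ∀ᶠ b in G n a, b < a ∧ CanDescend G k (n + 1) b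

theorem eventually_canDescend {U : ℕ → Ultrafilter Ordinal}
    {G : ℕ → Ordinal → Ultrafilter Ordinal} (hG : ∀ n, ∀ᶠ a in U n, ∀ᶠ b in G n a, b < a)
    (hU : ∀ n, U (n + 1) = (U n).bind (G n)) : ∀ k n, ∀ᶠ a in U n, CanDescend G k n a
  | 0, _ => Eventually.of_forall fun _ => trivial
  | k + 1, n => by
    have h := eventually_canDescend hG hU k (n + 1)
    rw [hU n, Ultrafilter.eventually_bind] at h
    exact (h.and (hG n)).mono fun _ ⟨hd, hlt⟩ => hlt.and hd

theorem wellFoundedOn_ketonenLT : {U | IsCountablyComplete U}.WellFoundedOn KetonenLT := by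
  rw [wellFoundedOn_iff, wellFounded_iff_isEmpty_descending_chain]
  refine ⟨fun ⟨U, hU⟩ => ?_⟩
  choose G hGcc hGlt hbind using fun n => (hU n).1
  set A := {a | ∃ n, ∀ k, CanDescend G k n a}
  have hA : A.Nonempty := by
    obtain ⟨a, ha⟩ := ((hU 0).2.2.eventually_forall
      fun k => eventually_canDescend hGlt hbind k 0).exists
    exact ⟨a, 0, ha⟩
  -- Countable completeness of `G n a` merges descents of every length into one step inside `A`.
  obtain ⟨a, ⟨n, ha⟩, hmin⟩ := Ordinal.lt_wf.has_min A hA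
  obtain ⟨b, hb⟩ := ((hGcc n a).eventually_forall fun k => ha (k + 1)).exists
  exact hmin b ⟨n + 1, fun k => (hb k).2⟩ (hb 0).1

def IsWeaklyNormalOn (W : Ultrafilter Ordinal) (δ : Ordinal) : Prop :=
  ∀ f : Ordinal → Ordinal, (∀ α, 0 < α → α < δ → f α < α) →
    ∃ β < δ, {α : Ordinal | α < δ ∧ f α < β} ∈ W

def IsWeaklyNormalUniform (W : Ultrafilter Ordinal) (δ : Ordinal) : Prop :=
  IsCountablyComplete W ∧ IsTailUniformOn W δ ∧ IsWeaklyNormalOn W δ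

def CarriesCCUniform (α : Ordinal) : Prop :=
  ∃ U : Ultrafilter Ordinal, IsCountablyComplete U ∧ IsTailUniformOn U α

namespace IsTailUniformOn

variable {W : Ultrafilter Ordinal} {δ : Ordinal}

theorem eventually_pos_lt (hW : IsTailUniformOn W δ) (hδ : 1 < δ) :
    ∀ᶠ α in W, 0 < α ∧ α < δ :=
  Eventually.mono (hW.2 1 hδ) fun _ ⟨h1, h2⟩ => ⟨zero_lt_one.trans_le h1, h2⟩

theorem map_of_unbounded (hW : IsTailUniformOn W δ) (hδ : 1 < δ) {r : Ordinal → Ordinal}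
    (hr : ∀ α, 0 < α → α < δ → r α < α) (hunb : ∀ β < δ, {α | α < δ ∧ r α < β} ∉ W) :
    IsTailUniformOn (W.map r) δ := by
  have hpos := hW.eventually_pos_lt hδ
  refine ⟨hpos.mono fun α ⟨h0, hα⟩ => (hr α h0 hα).trans hα, fun γ hγ => ?_⟩
  have hge : ∀ᶠ α in W, ¬ (α < δ ∧ r α < γ) := Ultrafilter.eventually_not.2 (hunb γ hγ)
  exact (hpos.and hge).mono fun α ⟨⟨h0, hα⟩, hn⟩ =>
    ⟨not_lt.1 fun h => hn ⟨hα, h⟩, (hr α h0 hα).trans hα⟩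

theorem bind (hW : IsTailUniformOn W δ) (hδ : Order.IsSuccLimit δ)
    {V : Ordinal → Ultrafilter Ordinal} (hV : ∀ᶠ α in W, IsTailUniformOn (V α) α) :
    IsTailUniformOn (W.bind V) δ := by
  have hlt : ∀ᶠ α in W, α < δ := hW.1
  refine ⟨(hlt.and hV).mono fun α ⟨hα, hVα⟩ => ?_, fun γ hγ => ?_⟩
  · exact mem_of_superset hVα.1 (Iio_subset_Iio hα.le)
  · have htail : ∀ᶠ α in W, α ∈ Ico (Order.succ γ) δ := hW.2 _ (hδ.succ_lt hγ)
    refine (htail.and hV).mono fun α ⟨⟨hγα, hαδ⟩, hVα⟩ => ?_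
    exact mem_of_superset (hVα.2 γ (Order.succ_le_iff.1 hγα)) (Ico_subset_Ico_right hαδ.le)

end IsTailUniformOn

theorem exists_map_isWeaklyNormalUniform {B : Ultrafilter Ordinal} {δ : Ordinal} (hδ : 1 < δ)
    (hB : IsCountablyComplete B) (hBu : IsTailUniformOn B δ) :
    ∃ f : Ordinal → Ordinal, IsWeaklyNormalUniform (B.map f) δ ∧ ∀ᶠ a in B, f a ≤ a := by
  have hid : id ∈ {f | IsTailUniformOn (B.map f) δ} := by
    rwa [mem_ofPred_eq, Ultrafilter.map_id]
  obtain ⟨f, hf, hmin⟩ := hB.wellFounded_eventually_lt.has_min _ ⟨id, hid⟩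
  refine ⟨f, ⟨hB.map f, hf, fun r hr => ?_⟩, ?_⟩
  · by_contra! hunb
    exact hmin (r ∘ f) (hf.map_of_unbounded hδ hr hunb)
      ((hf.eventually_pos_lt hδ).mono fun _ ⟨h0, ha⟩ => hr _ h0 ha)
  · by_contra hle
    exact hmin id hid ((Ultrafilter.eventually_not.2 hle).mono fun _ h => not_le.1 h)

theorem exists_ketonenLT_of_eventually_carries {W : Ultrafilter Ordinal} {δ : Ordinal}
    (hδ : Order.IsSuccLimit δ) (hW : IsWeaklyNormalUniform W δ)
    (hS : ∀ᶠ α in W, CarriesCCUniform α) :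
    ∃ W', IsWeaklyNormalUniform W' δ ∧ KetonenLT W' W := by
  have hchoice : ∀ α, ∃ V : Ultrafilter Ordinal,
      IsCountablyComplete V ∧ (CarriesCCUniform α → IsTailUniformOn V α) := by
    intro α
    by_cases h : CarriesCCUniform α
    · obtain ⟨V, hV, hVu⟩ := h
      exact ⟨V, hV, fun _ => hVu⟩
    · exact ⟨pure 0, isCountablyComplete_pure 0, fun h' => absurd h' h⟩
  choose V hVcc hVu using hchoice
  have hV : ∀ᶠ α in W, IsTailUniformOn (V α) α := hS.mono hVu
  obtain ⟨f, hWf, hfle⟩ := exists_map_isWeaklyNormalUniform (Ordinal.one_lt_of_isSuccLimit hδ)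
    (hW.1.bind hVcc) (hW.2.1.bind hδ hV)
  refine ⟨_, hWf, fun α => (V α).map f, fun α => (hVcc α).map f, ?_, Ultrafilter.map_bind f W V⟩
  rw [Ultrafilter.eventually_bind] at hfle
  exact (hfle.and hV).mono fun α ⟨hle, hVα⟩ =>
    (hle.and hVα.1).mono fun x ⟨hx, hxα⟩ => hx.trans_lt hxα

theorem exists_isWeaklyNormalUniform_eventually_not_carries {δ : Ordinal}
    (hδ : Order.IsSuccLimit δ) (hex : ∃ U, IsCountablyComplete U ∧ IsTailUniformOn U δ) :
    ∃ W, IsWeaklyNormalUniform W δ ∧ ∀ᶠ α in W, α < δ ∧ ¬ CarriesCCUniform α := by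
  obtain ⟨U, hU, hUu⟩ := hex
  obtain ⟨f, hUf, -⟩ := exists_map_isWeaklyNormalUniform (Ordinal.one_lt_of_isSuccLimit hδ) hU hUu
  obtain ⟨W, hW, hmin⟩ :=
    (wellFoundedOn_iff.1 wellFoundedOn_ketonenLT).has_min {W | IsWeaklyNormalUniform W δ} ⟨_, hUf⟩
  refine ⟨W, hW, ?_⟩
  by_contra h
  have hS : ∀ᶠ α in W, CarriesCCUniform α := by
    filter_upwards [Ultrafilter.eventually_not.2 h, hW.2.1.1] with α hn hα
    exact not_not.1 fun hc => hn ⟨hα, hc⟩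
  obtain ⟨W', hW', hlt⟩ := exists_ketonenLT_of_eventually_carries hδ hW hS
  exact hmin W' hW' ⟨hlt, hW'.1, hW.1⟩

theorem exists_ketonen_ultrafilter_general (δ : Cardinal)
    (hunc : Cardinal.aleph0 < δ)
    (hexists : ∃ U : Ultrafilter Ordinal, IsCountablyComplete U ∧
      IsTailUniformOn U δ.ord) :
    ∃ W : Ultrafilter Ordinal, IsCountablyComplete W ∧ IsTailUniformOn W δ.ord ∧
      (∀ f : Ordinal → Ordinal, (∀ α, 0 < α → α < δ.ord → f α < α) →
        ∃ β < δ.ord, {α : Ordinal | α < δ.ord ∧ f α < β} ∈ W) ∧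
      {α : Ordinal | α < δ.ord ∧
        ¬ ∃ U : Ultrafilter Ordinal, IsCountablyComplete U ∧ IsTailUniformOn U α} ∈ W := by
  obtain ⟨W, ⟨hcc, hu, hwn⟩, hS⟩ :=
    exists_isWeaklyNormalUniform_eventually_not_carries (Cardinal.isSuccLimit_ord hunc.le) hexists
  exact ⟨W, hcc, hu, hwn, hS⟩

/-- If a regular uncountable cardinal `δ` carries a tail-uniform
countably complete ultrafilter, then it carries a countably complete
tail-uniform ultrafilter `W` such that (1) every regressive function on `δ` is
bounded below `δ` on a `W`-large set, and (2) `W`-almost every `α < δ` carries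
no tail-uniform countably complete ultrafilter. -/
theorem exists_ketonen_ultrafilter (δ : Cardinal) (hreg : δ.IsRegular)
    (hunc : Cardinal.aleph0 < δ)
    (hexists : ∃ U : Ultrafilter Ordinal, IsCountablyComplete U ∧
      IsTailUniformOn U δ.ord) :
    ∃ W : Ultrafilter Ordinal, IsCountablyComplete W ∧ IsTailUniformOn W δ.ord ∧
      (∀ f : Ordinal → Ordinal, (∀ α, 0 < α → α < δ.ord → f α < α) →
        ∃ β < δ.ord, {α : Ordinal | α < δ.ord ∧ f α < β} ∈ W) ∧
      {α : Ordinal | α < δ.ord ∧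
        ¬ ∃ U : Ultrafilter Ordinal, IsCountablyComplete U ∧ IsTailUniformOn U α} ∈ W :=
  exists_ketonen_ultrafilter_general δ hunc hexists
end
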